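/- For all positive integers n, k, l, the identity ∑_{j=0}^{k} (−1)^j (j+1) · S1(n+1, n−j) · S2(n+k−j, n) = ∑_{j=1}^{n} j^{l(k+1)} holds, where S1 and S2 are the (l,1)-Stirling numbers of the first and second kinds (r = 1). -/
import Mathlib

set_option maxHeartbeats 1000000

/-- The `(l,r)`-Stirling numbers of the first kind. -/
def S1 (l r : ℕ) : ℕ → ℕ → ℕ
  | n, k =>
    if _h1 : n < r then 0
    else if _h2 : n = r then (if k = r then 1 else 0)
    else S1 l r (n - 1) (k - 1) + (n - 1) ^ l * S1 l r (n - 1) k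
termination_by n _ => n
decreasing_by all_goals omega

/-- The `(l,r)`-Stirling numbers of the second kind. -/
def S2 (l r : ℕ) : ℕ → ℕ → ℕ
  | n, k =>
    if _h1 : n < r then 0
    else if _h2 : n = r then (if k = r then 1 else 0)
    else S2 l r (n - 1) (k - 1) + k ^ l * S2 l r (n - 1) k
termination_by n _ => n
decreasing_by all_goals omega

/-- Elementary symmetric polynomials of `1^l, …, n^l`. -/
def ee (l : ℕ) : ℕ → ℕ → ℤ
  | 0, 0 => 1
  | 0, _ + 1 => 0
  | _ + 1, 0 => 1
  | n + 1, j + 1 => ee l n (j + 1) + ((n : ℤ) + 1) ^ l * ee l n j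

/-- Complete homogeneous symmetric polynomials of `1^l, …, n^l`. -/
def hh (l : ℕ) : ℕ → ℕ → ℤ
  | 0, 0 => 1
  | 0, _ + 1 => 0
  | _ + 1, 0 => 1
  | n + 1, j + 1 => hh l n (j + 1) + ((n : ℤ) + 1) ^ l * hh l (n + 1) j
termination_by n j => (n, j)

/-- Power sums of `1^l, …, n^l`. -/
def pp (l : ℕ) : ℕ → ℕ → ℤ
  | 0, _ => 0
  | n + 1, m => pp l n m + (((n : ℤ) + 1) ^ l) ^ m

@[simp] lemma ee_zero (l n : ℕ) : ee l n 0 = 1 := by cases n <;> rfl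

@[simp] lemma hh_zero (l n : ℕ) : hh l n 0 = 1 := by cases n <;> (rw [hh])

lemma ee_succ (l n j : ℕ) :
    ee l (n + 1) (j + 1) = ee l n (j + 1) + ((n : ℤ) + 1) ^ l * ee l n j := rfl

lemma hh_succ (l n j : ℕ) :
    hh l (n + 1) (j + 1) = hh l n (j + 1) + ((n : ℤ) + 1) ^ l * hh l (n + 1) j := by
  rw [hh]

lemma S1_one (l k : ℕ) : S1 l 1 1 k = if k = 1 then 1 else 0 := by
  rw [S1]; rw [dif_neg (by omega), dif_pos rfl]

lemma S1_succ (l n k : ℕ) (h : 1 ≤ n) :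
    S1 l 1 (n + 1) k = S1 l 1 n (k - 1) + n ^ l * S1 l 1 n k := by
  rw [S1]; rw [dif_neg (by omega), dif_neg (by omega)]
  simp

lemma S2_one (l k : ℕ) : S2 l 1 1 k = if k = 1 then 1 else 0 := by
  rw [S2]; rw [dif_neg (by omega), dif_pos rfl]

lemma S2_succ (l n k : ℕ) (h : 1 ≤ n) :
    S2 l 1 (n + 1) k = S2 l 1 n (k - 1) + k ^ l * S2 l 1 n k := by
  rw [S2]; rw [dif_neg (by omega), dif_neg (by omega)]
  simp

lemma ee_eq_zero (l : ℕ) : ∀ n j, n < j → ee l n j = 0 := by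
  intro n
  induction n with
  | zero => intro j hj; match j, hj with | j + 1, _ => rfl
  | succ n ih =>
    intro j hj
    match j, hj with
    | j + 1, hj =>
      rw [ee_succ, ih (j+1) (by omega), ih j (by omega), mul_zero, add_zero]

lemma S1_eq_zero (l : ℕ) : ∀ m k, m < k → S1 l 1 m k = 0 := by
  intro m
  induction m with
  | zero => intro k hk; rw [S1]; simp
  | succ m ih =>
    intro k hk
    rcases Nat.eq_zero_or_pos m with rfl | hm
    · rw [S1_one, if_neg (by omega)]
    · rw [S1_succ l m k hm, ih (k-1) (by omega), ih k (by omega)]; simp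

lemma S1_cast (l : ℕ) : ∀ n j, (S1 l 1 (n + 1) (n + 1 - j) : ℤ) = ee l n j := by
  intro n
  induction n with
  | zero =>
    intro j
    rw [S1_one]
    rcases j with _ | j
    · simp
    · rw [if_neg (by omega), show ee l 0 (j + 1) = 0 from rfl]
      simp
  | succ n ih =>
    intro j
    rw [S1_succ l (n+1) _ (by omega)]
    rcases j with _ | j
    · rw [show n + 1 + 1 - 0 - 1 = n + 1 - 0 from rfl,
        show n + 1 + 1 - 0 = n + 2 from rfl,
        S1_eq_zero l (n+1) (n+2) (by omega)]
      rw [Nat.cast_add, Nat.cast_mul, ih 0]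
      simp
    · have h1 := ih (j + 1)
      rw [show n + 1 - (j + 1) = n - j from by omega] at h1
      rw [show n + 1 + 1 - (j + 1) - 1 = n - j from by omega,
          show n + 1 + 1 - (j + 1) = n + 1 - j from by omega,
          Nat.cast_add, Nat.cast_mul, h1, ih j, Nat.cast_pow, Nat.cast_add,
          Nat.cast_one, ee_succ]

lemma S2_zero (l : ℕ) (hl : 1 ≤ l) : ∀ m, S2 l 1 m 0 = 0 := by
  intro m
  induction m with
  | zero => rw [S2]; simp
  | succ m ih =>
    rcases Nat.eq_zero_or_pos m with rfl | hm
    · rw [S2_one, if_neg (by omega)]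
    · rw [S2_succ l m 0 hm, Nat.zero_sub, ih, Nat.zero_pow (by omega)]

lemma S2_gt (l : ℕ) : ∀ m k, m < k → S2 l 1 m k = 0 := by
  intro m
  induction m with
  | zero => intro k hk; rw [S2]; simp
  | succ m ih =>
    intro k hk
    rcases Nat.eq_zero_or_pos m with rfl | hm
    · rw [S2_one, if_neg (by omega)]
    · rw [S2_succ l m k hm, ih (k-1) (by omega), ih k (by omega)]; simp

lemma S2_diag (l : ℕ) : ∀ m, 1 ≤ m → S2 l 1 m m = 1 := by
  intro m
  induction m with
  | zero => omega
  | succ m ih =>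
    intro _
    rcases Nat.eq_zero_or_pos m with rfl | hm
    · rw [S2_one, if_pos rfl]
    · rw [S2_succ l m (m+1) hm, Nat.add_sub_cancel, ih hm,
        S2_gt l m (m+1) (by omega)]
      simp

lemma S2_cast_one (l : ℕ) (hl : 1 ≤ l) :
    ∀ j, (S2 l 1 (1 + j) 1 : ℤ) = hh l 1 j := by
  intro j
  induction j with
  | zero => rw [Nat.add_zero, S2_one, if_pos rfl, hh_zero]; rfl
  | succ j ih =>
    rw [show 1 + (j + 1) = (1 + j) + 1 from by omega,
      S2_succ l (1+j) 1 (by omega), Nat.sub_self,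
      S2_zero l hl (1+j), show hh l 1 (j+1) = hh l 0 (j+1) + ((0:ℤ)+1)^l * hh l 1 j
        from hh_succ l 0 j,
      show hh l 0 (j+1) = 0 from by rw [hh]]
    push_cast [ih]
    ring

lemma S2_cast (l : ℕ) (hl : 1 ≤ l) :
    ∀ n, 1 ≤ n → ∀ j, (S2 l 1 (n + j) n : ℤ) = hh l n j := by
  intro n
  induction n with
  | zero => omega
  | succ n ihn =>
    intro _ j
    rcases Nat.eq_zero_or_pos n with rfl | hn
    · simpa using S2_cast_one l hl j
    · induction j with
      | zero => rw [Nat.add_zero, S2_diag l (n+1) (by omega), hh_zero]; rfl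
      | succ j ihj =>
        rw [show n + 1 + (j + 1) = (n + 1 + j) + 1 from by omega,
          S2_succ l (n+1+j) (n+1) (by omega), Nat.add_sub_cancel]
        have h1 : (S2 l 1 (n + 1 + j) n : ℤ) = hh l n (j+1) := by
          rw [show n + 1 + j = n + (j+1) from by omega]; exact ihn hn (j+1)
        rw [hh_succ]
        push_cast [h1, ihj]
        ring

lemma pp_eq (l : ℕ) (m : ℕ) : ∀ n, pp l n m = ∑ j ∈ Finset.Icc 1 n, (j:ℤ)^(l*m) := by
  intro n
  induction n with
  | zero => rw [show pp l 0 m = 0 from rfl]; simp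
  | succ n ih =>
    rw [show pp l (n+1) m = pp l n m + (((n : ℤ) + 1) ^ l) ^ m from rfl, ih,
      Finset.sum_Icc_succ_top (by omega : 1 ≤ n + 1), ← pow_mul]
    push_cast
    ring

lemma orth (l : ℕ) : ∀ n m,
    ∑ i ∈ Finset.range (m + 1), (-1 : ℤ) ^ i * ee l n i * hh l n (m - i)
      = if m = 0 then 1 else 0 := by
  intro n
  induction n with
  | zero =>
    intro m
    rw [Finset.sum_eq_single 0]
    · rcases m with _ | m
      · simp
      · rw [if_neg (by omega)]
        simp [show hh l 0 (m+1) = 0 from by rw [hh]]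
    · intro i _ hne
      match i, hne with
      | i + 1, _ => rw [show ee l 0 (i+1) = 0 from rfl]; ring
    · intro h; simp at h
  | succ n ihn =>
    intro m
    induction m with
    | zero => simp
    | succ m ihm =>
      rw [if_neg (by omega), Finset.sum_range_succ]
      have hsplit : ∀ i ∈ Finset.range (m + 1),
          (-1 : ℤ) ^ i * ee l (n+1) i * hh l (n+1) (m + 1 - i)
            = (-1 : ℤ) ^ i * ee l (n+1) i * hh l n (m + 1 - i)
              + ((n : ℤ) + 1) ^ l *
                ((-1 : ℤ) ^ i * ee l (n+1) i * hh l (n+1) (m - i)) := by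
        intro i hi
        rw [show m + 1 - i = (m - i) + 1 from by
            simp only [Finset.mem_range] at hi; omega, hh_succ]
        ring
      rw [Finset.sum_congr rfl hsplit, Finset.sum_add_distrib, ← Finset.mul_sum, ihm]
      have hU : ∑ i ∈ Finset.range (m + 2),
          (-1 : ℤ) ^ i * ee l (n+1) i * hh l n (m + 1 - i)
          = (∑ i ∈ Finset.range (m + 1),
              (-1 : ℤ) ^ i * ee l (n+1) i * hh l n (m + 1 - i))
            + (-1 : ℤ) ^ (m+1) * ee l (n+1) (m+1) * hh l (n+1) 0 := by
        rw [Finset.sum_range_succ, Nat.sub_self, hh_zero, hh_zero]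
      have hU2 : ∑ i ∈ Finset.range (m + 2),
          (-1 : ℤ) ^ i * ee l (n+1) i * hh l n (m + 1 - i)
          = - (((n : ℤ) + 1) ^ l) * (if m = 0 then 1 else 0) := by
        rw [Finset.sum_range_succ']
        have hterm : ∀ i ∈ Finset.range (m + 1),
            (-1 : ℤ) ^ (i+1) * ee l (n+1) (i+1) * hh l n (m + 1 - (i+1))
              = (-1 : ℤ) ^ (i+1) * ee l n (i+1) * hh l n (m - i)
                + (- (((n : ℤ) + 1) ^ l)) *
                  ((-1 : ℤ) ^ i * ee l n i * hh l n (m - i)) := by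
          intro i _
          rw [show m + 1 - (i + 1) = m - i from by omega, ee_succ, pow_succ]
          ring
        rw [Finset.sum_congr rfl hterm, Finset.sum_add_distrib, ← Finset.mul_sum, ihn m]
        have hI : (∑ i ∈ Finset.range (m + 1),
            (-1 : ℤ) ^ (i+1) * ee l n (i+1) * hh l n (m - i))
              + (-1 : ℤ) ^ 0 * ee l (n+1) 0 * hh l n (m + 1 - 0)
            = ∑ i ∈ Finset.range (m + 2), (-1 : ℤ) ^ i * ee l n i * hh l n (m + 1 - i) := by
          rw [Finset.sum_range_succ' (fun i => (-1 : ℤ) ^ i * ee l n i * hh l n (m + 1 - i))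
            (m + 1)]
          congr 1
          · apply Finset.sum_congr rfl
            intro i _
            rw [show m + 1 - (i + 1) = m - i from by omega]
          · rw [ee_zero, ee_zero]
        rw [add_right_comm, hI, ihn (m+1), if_neg (by omega)]
        ring
      rw [hU] at hU2
      rw [hh_zero] at hU2
      rw [Nat.sub_self, hh_zero]
      linear_combination hU2

lemma newton (l : ℕ) : ∀ n k,
    ∑ j ∈ Finset.range (k + 1), (-1 : ℤ) ^ j * ee l n j * pp l n (k + 1 - j)
      = (-1 : ℤ) ^ k * ((k : ℤ) + 1) * ee l n (k + 1) := by
  intro n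
  induction n with
  | zero =>
    intro k
    rw [show ee l 0 (k+1) = 0 from rfl, Finset.sum_eq_zero]
    · ring
    · intro j _
      rw [show pp l 0 (k + 1 - j) = 0 from rfl]
      ring
  | succ n ihn =>
    intro k
    have hterm : ∀ j ∈ Finset.range (k + 1),
        (-1 : ℤ) ^ j * ee l (n+1) j * pp l (n+1) (k + 1 - j)
          = (-1 : ℤ) ^ j * ee l (n+1) j * pp l n (k + 1 - j)
            + (-1 : ℤ) ^ j * ee l (n+1) j * (((n : ℤ) + 1) ^ l) ^ (k + 1 - j) := by
      intro j _
      rw [show pp l (n+1) (k + 1 - j)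
          = pp l n (k + 1 - j) + (((n : ℤ) + 1) ^ l) ^ (k + 1 - j) from rfl]
      ring
    rw [Finset.sum_congr rfl hterm, Finset.sum_add_distrib]
    -- B : the second sum telescopes
    have hB : ∑ j ∈ Finset.range (k + 1),
        (-1 : ℤ) ^ j * ee l (n+1) j * (((n : ℤ) + 1) ^ l) ^ (k + 1 - j)
          = (-1 : ℤ) ^ k * ee l n k * ((n : ℤ) + 1) ^ l := by
      have hC : ∀ j ∈ Finset.range k,
          (-1 : ℤ) ^ (j+1) * ee l (n+1) (j+1) * (((n : ℤ) + 1) ^ l) ^ (k + 1 - (j+1))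
            = (-1 : ℤ) ^ (j+1) * ee l n (j+1) * (((n : ℤ) + 1) ^ l) ^ (k + 1 - (j+1))
              - (-1 : ℤ) ^ j * ee l n j * (((n : ℤ) + 1) ^ l) ^ (k + 1 - j) := by
        intro j hj
        simp only [Finset.mem_range] at hj
        rw [ee_succ, show k + 1 - j = (k + 1 - (j + 1)) + 1 from by omega, pow_succ,
          pow_succ]
        ring
      rw [Finset.sum_range_succ' (fun j => (-1 : ℤ) ^ j * ee l (n+1) j *
          (((n : ℤ) + 1) ^ l) ^ (k + 1 - j)) k,
        Finset.sum_congr rfl hC, Finset.sum_range_sub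
          (fun j => (-1 : ℤ) ^ j * ee l n j * (((n : ℤ) + 1) ^ l) ^ (k + 1 - j)) k]
      rw [show k + 1 - k = 1 from by omega, Nat.sub_zero, pow_one, ee_zero, ee_zero]
      ring
    -- A : the first sum via the induction hypothesis
    have hD : ∑ j ∈ Finset.range k, (-1 : ℤ) ^ j * ee l n j * pp l n (k - j)
        = - ((-1 : ℤ) ^ k * (k : ℤ) * ee l n k) := by
      rcases k with _ | k'
      · simp
      · rw [show (Finset.range (k' + 1)).sum
              (fun j => (-1 : ℤ) ^ j * ee l n j * pp l n (k' + 1 - j))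
            = (-1 : ℤ) ^ k' * ((k' : ℤ) + 1) * ee l n (k' + 1) from ihn k', pow_succ]
        push_cast
        ring
    have hterm2 : ∀ j ∈ Finset.range k,
        (-1 : ℤ) ^ (j+1) * ee l (n+1) (j+1) * pp l n (k + 1 - (j+1))
          = (-1 : ℤ) ^ (j+1) * ee l n (j+1) * pp l n (k + 1 - (j+1))
            + (- ((n : ℤ) + 1) ^ l) * ((-1 : ℤ) ^ j * ee l n j * pp l n (k - j)) := by
      intro j _
      rw [ee_succ, show k + 1 - (j + 1) = k - j from by omega, pow_succ]
      ring
    have hA0 : (∑ j ∈ Finset.range k,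
          (-1 : ℤ) ^ (j+1) * ee l n (j+1) * pp l n (k + 1 - (j+1)))
          + (-1 : ℤ) ^ 0 * ee l (n+1) 0 * pp l n (k + 1 - 0)
        = ∑ j ∈ Finset.range (k + 1), (-1 : ℤ) ^ j * ee l n j * pp l n (k + 1 - j) := by
      rw [Finset.sum_range_succ' (fun j => (-1 : ℤ) ^ j * ee l n j * pp l n (k + 1 - j)) k]
      congr 1
      simp
    have hA : ∑ j ∈ Finset.range (k + 1),
        (-1 : ℤ) ^ j * ee l (n+1) j * pp l n (k + 1 - j)
        = (-1 : ℤ) ^ k * ((k : ℤ) + 1) * ee l n (k + 1)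
          + (- ((n : ℤ) + 1) ^ l) * (- ((-1 : ℤ) ^ k * (k : ℤ) * ee l n k)) := by
      rw [Finset.sum_range_succ'
          (fun j => (-1 : ℤ) ^ j * ee l (n+1) j * pp l n (k + 1 - j)) k,
        Finset.sum_congr rfl hterm2, Finset.sum_add_distrib, ← Finset.mul_sum, hD,
        add_right_comm, hA0, ihn k]
    rw [hA, hB, ee_succ]
    ring

lemma key (l n k : ℕ) :
    ∑ a ∈ Finset.range (k + 1),
        (-1 : ℤ) ^ a * ((a : ℤ) + 1) * ee l n (a + 1) * hh l n (k - a)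
      = pp l n (k + 1) := by
  set f : ℕ → ℕ → ℤ :=
    fun u v => (-1 : ℤ) ^ v * ee l n v * pp l n (u + 1) * hh l n (k - v - u) with hf
  have h1 : ∀ a ∈ Finset.range (k + 1),
      (-1 : ℤ) ^ a * ((a : ℤ) + 1) * ee l n (a + 1) * hh l n (k - a)
        = ∑ j ∈ Finset.range (a + 1), f j (a - j) := by
    intro a ha
    simp only [Finset.mem_range] at ha
    calc (-1 : ℤ) ^ a * ((a : ℤ) + 1) * ee l n (a + 1) * hh l n (k - a)
        = ∑ j ∈ Finset.range (a + 1),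
            ((-1 : ℤ) ^ j * ee l n j * pp l n (a + 1 - j)) * hh l n (k - a) := by
          rw [← Finset.sum_mul, newton l n a]
      _ = ∑ j ∈ Finset.range (a + 1),
            ((-1 : ℤ) ^ (a + 1 - 1 - j) * ee l n (a + 1 - 1 - j)
              * pp l n (a + 1 - (a + 1 - 1 - j))) * hh l n (k - a) :=
          (Finset.sum_range_reflect
            (fun j => ((-1 : ℤ) ^ j * ee l n j * pp l n (a + 1 - j)) * hh l n (k - a))
            (a + 1)).symm
      _ = ∑ j ∈ Finset.range (a + 1), f j (a - j) := by
          apply Finset.sum_congr rfl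
          intro j hj
          simp only [Finset.mem_range] at hj
          simp only [hf]
          rw [show a + 1 - 1 - j = a - j from by omega,
            show a + 1 - (a - j) = j + 1 from by omega,
            show k - (a - j) - j = k - a from by omega]
  rw [Finset.sum_congr rfl h1, Finset.sum_range_diag_flip (k + 1) f]
  have h3 : ∀ m ∈ Finset.range (k + 1),
      ∑ i ∈ Finset.range (k + 1 - m), f m i
        = if k - m = 0 then pp l n (m + 1) else 0 := by
    intro m hm
    simp only [Finset.mem_range] at hm
    rw [show k + 1 - m = (k - m) + 1 from by omega]
    have e1 : ∀ i ∈ Finset.range ((k - m) + 1),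
        f m i = ((-1 : ℤ) ^ i * ee l n i * hh l n ((k - m) - i)) * pp l n (m + 1) := by
      intro i hi
      simp only [Finset.mem_range] at hi
      simp only [hf]
      rw [show k - i - m = (k - m) - i from by omega]
      ring
    rw [Finset.sum_congr rfl e1, ← Finset.sum_mul, orth l n (k - m)]
    split_ifs with h
    · rw [one_mul]
    · rw [zero_mul]
  rw [Finset.sum_congr rfl h3, Finset.sum_eq_single k]
  · rw [if_pos (Nat.sub_self k)]
  · intro b hb hbk
    simp only [Finset.mem_range] at hb
    rw [if_neg (by omega)]
  · intro h
    simp at h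

theorem stmt14 (l n k : ℕ) (hn : 1 ≤ n) (hk : 1 ≤ k) (hl : 1 ≤ l) :
    ∑ j ∈ Finset.range (k + 1),
      (-1 : ℤ) ^ j * (j + 1) * (S1 l 1 (n + 1) (n - j) : ℤ) * (S2 l 1 (n + k - j) n : ℤ) =
      ∑ j ∈ Finset.Icc 1 n, (j : ℤ) ^ (l * (k + 1)) := by
  have hterm : ∀ j ∈ Finset.range (k + 1),
      (-1 : ℤ) ^ j * (j + 1) * (S1 l 1 (n + 1) (n - j) : ℤ) * (S2 l 1 (n + k - j) n : ℤ)
        = (-1 : ℤ) ^ j * ((j : ℤ) + 1) * ee l n (j + 1) * hh l n (k - j) := by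
    intro j hj
    simp only [Finset.mem_range] at hj
    have e1 : (S1 l 1 (n + 1) (n - j) : ℤ) = ee l n (j + 1) := by
      have h := S1_cast l n (j + 1)
      rwa [show n + 1 - (j + 1) = n - j from by omega] at h
    have e2 : (S2 l 1 (n + k - j) n : ℤ) = hh l n (k - j) := by
      have h := S2_cast l hl n hn (k - j)
      rwa [show n + (k - j) = n + k - j from by omega] at h
    rw [e1, e2]
  rw [Finset.sum_congr rfl hterm, key l n k, pp_eq]
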